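/- Let α ∈ (0,1), ε ∈ (0,1), and κ ∈ (0,1). For any v ∈ H¹₀((0,1)), ∫₀^κ (x+ε)^(−α) |v(x)|² dx ≤ C_{κ,α} ∫₀^κ (x+ε)^α |v′(x)|² dx, where C_{κ,α} = ((κ+ε)^(2−2α) − ε^(2−2α)) / ((1−α)(2−2α)). -/

import Mathlib

/-!
Writing `v x = ∫₀ˣ v'`, the Cauchy–Schwarz inequality with the weight `w t = (t + ε) ^ α` gives
`v x ^ 2 ≤ (∫₀ˣ w⁻¹) (∫₀ˣ w v'²) ≤ (x + ε) ^ (1 - α) / (1 - α) · ∫₀^κ w v'²`.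
Multiplying by `(x + ε) ^ (-α)` and integrating `(x + ε) ^ (1 - 2α)` over `[0, κ]` yields `C_{κ,α}`.
-/

open MeasureTheory Set

section WeightedCauchySchwarz

variable {X : Type*} [MeasurableSpace X] {μ : Measure X} {w g : X → ℝ}

theorem integrable_of_integrable_inv_of_integrable_mul_sq (hw : ∀ᵐ x ∂μ, 0 < w x)
    (hg : AEStronglyMeasurable g μ) (hw_inv : Integrable (fun x => (w x)⁻¹) μ)
    (hwg : Integrable (fun x => w x * g x ^ 2) μ) : Integrable g μ := by
  refine ((hw_inv.add hwg).div_const 2).mono' hg ?_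
  filter_upwards [hw] with x hx
  have hamgm : 0 ≤ (w x)⁻¹ * (w x * |g x| - 1) ^ 2 := by positivity
  have hexpand : (w x)⁻¹ * (w x * |g x| - 1) ^ 2 = (w x)⁻¹ + w x * g x ^ 2 - 2 * |g x| := by
    rw [← sq_abs (g x)]
    field_simp
    ring
  rw [Real.norm_eq_abs, Pi.add_apply]
  linarith

/-- The quadratic `t ↦ ∫ w⁻¹ (t w g + 1)²` is nonnegative, so its discriminant is nonpositive. -/
theorem sq_integral_le_integral_inv_mul_integral_mul_sq (hw : ∀ᵐ x ∂μ, 0 < w x)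
    (hw_inv : Integrable (fun x => (w x)⁻¹) μ) (hg : Integrable g μ)
    (hwg : Integrable (fun x => w x * g x ^ 2) μ) :
    (∫ x, g x ∂μ) ^ 2 ≤ (∫ x, (w x)⁻¹ ∂μ) * ∫ x, w x * g x ^ 2 ∂μ := by
  have hquadratic : ∀ t : ℝ, 0 ≤ (∫ x, w x * g x ^ 2 ∂μ) * (t * t) +
      2 * (∫ x, g x ∂μ) * t + ∫ x, (w x)⁻¹ ∂μ := by
    intro t
    have hexpand : ∀ᵐ x ∂μ, (w x)⁻¹ * (t * w x * g x + 1) ^ 2 =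
        t * t * (w x * g x ^ 2) + 2 * t * g x + (w x)⁻¹ := by
      filter_upwards [hw] with x hx
      field_simp
      ring
    have hsum : Integrable (fun x => t * t * (w x * g x ^ 2) + 2 * t * g x) μ :=
      (hwg.const_mul _).add (hg.const_mul _)
    calc 0 ≤ ∫ x, (w x)⁻¹ * (t * w x * g x + 1) ^ 2 ∂μ := by
          refine integral_nonneg_of_ae ?_
          filter_upwards [hw] with x hx
          positivity
      _ = ∫ x, (t * t * (w x * g x ^ 2) + 2 * t * g x + (w x)⁻¹) ∂μ := integral_congr_ae hexpand
      _ = _ := by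
          rw [integral_add hsum hw_inv, integral_add (hwg.const_mul _) (hg.const_mul _),
            integral_const_mul, integral_const_mul]
          ring
  have hdiscrim := discrim_le_zero hquadratic
  rw [discrim] at hdiscrim
  linarith

end WeightedCauchySchwarz

theorem aestronglyMeasurable_of_hasDerivAt {μ : Measure ℝ} {f f' : ℝ → ℝ} {s : Set ℝ}
    (hs : MeasurableSet s) (hf : ∀ x ∈ s, HasDerivAt f (f' x) x) :
    AEStronglyMeasurable f' (μ.restrict s) :=
  (aestronglyMeasurable_deriv f _).congr <|
    (ae_restrict_iff' hs).2 (.of_forall fun x hx => (hf x hx).deriv)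

theorem sq_sub_le_integral_inv_mul_integral_mul_sq_deriv {a b : ℝ} (hab : a ≤ b)
    {v v' w : ℝ → ℝ} (hv : ∀ x ∈ Icc a b, HasDerivAt v (v' x) x) (hw : ∀ x ∈ Icc a b, 0 < w x)
    (hw_inv : IntervalIntegrable (fun x => (w x)⁻¹) volume a b)
    (hwv' : IntervalIntegrable (fun x => w x * v' x ^ 2) volume a b) :
    (v b - v a) ^ 2 ≤ (∫ x in a..b, (w x)⁻¹) * ∫ x in a..b, w x * v' x ^ 2 := by
  rw [intervalIntegrable_iff_integrableOn_Ioc_of_le hab] at hw_inv hwv'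
  have hw_ae : ∀ᵐ x ∂volume.restrict (Ioc a b), 0 < w x :=
    ae_restrict_of_forall_mem measurableSet_Ioc fun x hx => hw x (Ioc_subset_Icc_self hx)
  have hv' : IntegrableOn v' (Ioc a b) :=
    integrable_of_integrable_inv_of_integrable_mul_sq hw_ae
      (aestronglyMeasurable_of_hasDerivAt measurableSet_Ioc
        fun x hx => hv x (Ioc_subset_Icc_self hx)) hw_inv hwv'
  rw [← intervalIntegral.integral_eq_sub_of_hasDerivAt (by rwa [uIcc_of_le hab])
      ((intervalIntegrable_iff_integrableOn_Ioc_of_le hab).2 hv'),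
    intervalIntegral.integral_of_le hab, intervalIntegral.integral_of_le hab,
    intervalIntegral.integral_of_le hab]
  exact sq_integral_le_integral_inv_mul_integral_mul_sq hw_ae hw_inv hv' hwv'

theorem intervalIntegral_mono_of_nonneg {a b : ℝ} (hab : a ≤ b) {f g : ℝ → ℝ}
    (hf : ∀ x ∈ Ioc a b, 0 ≤ f x) (hg : IntervalIntegrable g volume a b)
    (hfg : ∀ x ∈ Ioc a b, f x ≤ g x) : ∫ x in a..b, f x ≤ ∫ x in a..b, g x := by
  rw [intervalIntegral.integral_of_le hab, intervalIntegral.integral_of_le hab]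
  exact integral_mono_of_nonneg ((ae_restrict_iff' measurableSet_Ioc).2 (.of_forall hf))
    ((intervalIntegrable_iff_integrableOn_Ioc_of_le hab).1 hg)
    ((ae_restrict_iff' measurableSet_Ioc).2 (.of_forall hfg))

section PowerWeight

variable {α ε : ℝ}

theorem integral_add_const_rpow {a b c r : ℝ} (hr : -1 < r) :
    ∫ x in a..b, (x + c) ^ r = ((b + c) ^ (r + 1) - (a + c) ^ (r + 1)) / (r + 1) := by
  rw [intervalIntegral.integral_comp_add_right (fun x => x ^ r), integral_rpow (Or.inl hr)]

theorem continuousOn_add_const_rpow (hε : 0 < ε) (r : ℝ) :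
    ContinuousOn (fun x => (x + ε) ^ r) (Ici 0) :=
  (continuousOn_id.add continuousOn_const).rpow_const fun _ hx =>
    Or.inl (add_pos_of_nonneg_of_pos (mem_Ici.1 hx) hε).ne'

theorem integral_inv_add_const_rpow_le (hε : 0 < ε) (hα : α < 1) {x : ℝ} (hx : 0 ≤ x) :
    ∫ t in (0:ℝ)..x, ((t + ε) ^ α)⁻¹ ≤ (x + ε) ^ (1 - α) / (1 - α) := by
  have hinv : EqOn (fun t => ((t + ε) ^ α)⁻¹) (fun t => (t + ε) ^ (-α)) (uIcc 0 x) := by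
    intro t ht
    exact (Real.rpow_neg (by linarith [(uIcc_of_le hx ▸ ht).1]) α).symm
  rw [intervalIntegral.integral_congr hinv, integral_add_const_rpow (by linarith), zero_add,
    neg_add_eq_sub]
  exact div_le_div_of_nonneg_right (sub_le_self _ (by positivity)) (by linarith)

theorem sq_le_rpow_mul_integral_rpow_mul_sq_deriv (hε : 0 < ε) (hα : α < 1) {x κ : ℝ}
    (hx : x ∈ Icc 0 κ) {v v' : ℝ → ℝ} (hv : ∀ t ∈ Icc 0 κ, HasDerivAt v (v' t) t)
    (hv0 : v 0 = 0) (hint : IntervalIntegrable (fun t => (t + ε) ^ α * v' t ^ 2) volume 0 κ) :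
    v x ^ 2 ≤ (x + ε) ^ (1 - α) / (1 - α) * ∫ t in (0:ℝ)..κ, (t + ε) ^ α * v' t ^ 2 := by
  obtain ⟨hx0, hxκ⟩ := hx
  have hweight : ∀ t ∈ Ici (0:ℝ), 0 < (t + ε) ^ α := fun t ht =>
    Real.rpow_pos_of_pos (add_pos_of_nonneg_of_pos ht hε) α
  have hw_inv : IntervalIntegrable (fun t => ((t + ε) ^ α)⁻¹) volume 0 x :=
    (((continuousOn_add_const_rpow hε α).mono Icc_subset_Ici_self).inv₀ fun t ht =>
      (hweight t ht.1).ne').intervalIntegrable_of_Icc hx0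
  have hint_x : IntervalIntegrable (fun t => (t + ε) ^ α * v' t ^ 2) volume 0 x :=
    hint.mono_set (uIcc_subset_uIcc_left (by rw [uIcc_of_le (hx0.trans hxκ)]; exact ⟨hx0, hxκ⟩))
  have hcs := sq_sub_le_integral_inv_mul_integral_mul_sq_deriv hx0
    (fun t ht => hv t ⟨ht.1, ht.2.trans hxκ⟩) (fun t ht => hweight t ht.1) hw_inv hint_x
  rw [hv0, sub_zero] at hcs
  have hnonneg : ∀ t ∈ Ici (0:ℝ), 0 ≤ (t + ε) ^ α * v' t ^ 2 := fun t ht =>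
    mul_nonneg (hweight t ht).le (sq_nonneg _)
  refine hcs.trans (mul_le_mul (integral_inv_add_const_rpow_le hε hα hx0) ?_
    (intervalIntegral.integral_nonneg hx0 fun t ht => hnonneg t ht.1) (by positivity))
  exact intervalIntegral.integral_mono_interval le_rfl hx0 hxκ
    ((ae_restrict_iff' measurableSet_Ioc).2 (.of_forall fun t ht => hnonneg t ht.1.le)) hint

end PowerWeight

theorem weighted_hardy_near_zero_general (α ε κ : ℝ) (hα : α ∈ Set.Ioo (0:ℝ) 1)
    (hε : ε ∈ Set.Ioo (0:ℝ) 1) (hκ : κ ∈ Set.Ioo (0:ℝ) 1)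
    (v v' : ℝ → ℝ)
    (hv : ∀ x ∈ Set.Icc (0:ℝ) 1, HasDerivAt v (v' x) x)
    (hv0 : v 0 = 0)
    (hint2 : IntervalIntegrable (fun x => (x+ε)^α * (v' x)^2) volume 0 κ) :
    ∫ x in (0:ℝ)..κ, (x+ε)^(-α) * (v x)^2 ≤
      (((κ+ε)^(2-2*α) - ε^(2-2*α)) / ((1-α)*(2-2*α))) *
        ∫ x in (0:ℝ)..κ, (x+ε)^α * (v' x)^2 := by
  obtain ⟨-, hα1⟩ := hα
  obtain ⟨hε0, -⟩ := hε
  obtain ⟨hκ0, hκ1⟩ := hκ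
  set J := ∫ x in (0:ℝ)..κ, (x + ε) ^ α * v' x ^ 2
  have hpos : ∀ x ∈ Ioc 0 κ, 0 < x + ε := fun x hx => by linarith [hx.1]
  have hpointwise : ∀ x ∈ Ioc 0 κ,
      (x + ε) ^ (-α) * v x ^ 2 ≤ (x + ε) ^ (1 - 2 * α) / (1 - α) * J := by
    intro x hx
    calc (x + ε) ^ (-α) * v x ^ 2
        ≤ (x + ε) ^ (-α) * ((x + ε) ^ (1 - α) / (1 - α) * J) :=
          mul_le_mul_of_nonneg_left (sq_le_rpow_mul_integral_rpow_mul_sq_deriv hε0 hα1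
            (Ioc_subset_Icc_self hx) (fun t ht => hv t ⟨ht.1, ht.2.trans hκ1.le⟩) hv0 hint2)
            (Real.rpow_nonneg (hpos x hx).le _)
      _ = (x + ε) ^ (1 - 2 * α) / (1 - α) * J := by
          rw [show 1 - 2 * α = -α + (1 - α) by ring, Real.rpow_add (hpos x hx)]
          ring
  calc ∫ x in (0:ℝ)..κ, (x + ε) ^ (-α) * v x ^ 2
      ≤ ∫ x in (0:ℝ)..κ, (x + ε) ^ (1 - 2 * α) / (1 - α) * J :=
        intervalIntegral_mono_of_nonneg hκ0.le (fun x hx => by have := hpos x hx; positivity)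
          ((((continuousOn_add_const_rpow hε0 _).mono Icc_subset_Ici_self).div_const _).mul_const _
            |>.intervalIntegrable_of_Icc hκ0.le) hpointwise
    _ = ((κ + ε) ^ (2 - 2 * α) - ε ^ (2 - 2 * α)) / ((1 - α) * (2 - 2 * α)) * J := by
        rw [intervalIntegral.integral_mul_const, intervalIntegral.integral_div,
          integral_add_const_rpow (by linarith), zero_add, show 1 - 2 * α + 1 = 2 - 2 * α by ring,
          div_div, mul_comm (2 - 2 * α)]

/-- Weighted Hardy-type inequality near the degeneracy point: for `v ∈ H¹₀((0,1))`,
`∫₀^κ (x+ε)^(−α)|v|² ≤ C_{κ,α} ∫₀^κ (x+ε)^α |v′|²` with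
`C_{κ,α} = ((κ+ε)^(2−2α) − ε^(2−2α))/((1−α)(2−2α))`. -/
theorem weighted_hardy_near_zero (α ε κ : ℝ) (hα : α ∈ Set.Ioo (0:ℝ) 1)
    (hε : ε ∈ Set.Ioo (0:ℝ) 1) (hκ : κ ∈ Set.Ioo (0:ℝ) 1)
    (v v' : ℝ → ℝ)
    (hv : ∀ x ∈ Set.Icc (0:ℝ) 1, HasDerivAt v (v' x) x)
    (hv0 : v 0 = 0) (hv1 : v 1 = 0)
    (hint1 : IntervalIntegrable (fun x => (x+ε)^(-α) * (v x)^2) volume 0 κ)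
    (hint2 : IntervalIntegrable (fun x => (x+ε)^α * (v' x)^2) volume 0 κ) :
    ∫ x in (0:ℝ)..κ, (x+ε)^(-α) * (v x)^2 ≤
      (((κ+ε)^(2-2*α) - ε^(2-2*α)) / ((1-α)*(2-2*α))) *
        ∫ x in (0:ℝ)..κ, (x+ε)^α * (v' x)^2 :=
  weighted_hardy_near_zero_general α ε κ hα hε hκ v v' hv hv0 hint2
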